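/- Let p₀, p₁, p₂ ∈ ℂ(x) with p₀ ≠ 0 and P := p₁² − p₀p₂ ≠ 0. Suppose dj, T, IH ∈ Aut_ℂ(K) each fix ℂ(x) pointwise and satisfy dj(y) = P/y, T(y) = p₀·y + p₁, and IH(y) = (−p₁·y − p₂)/(p₀·y + p₁). Then T ∘ dj ∘ T⁻¹ = IH; in particular the de Jonquières involution dj_P with P = p₁² − p₀p₂ is conjugate in Aut_ℂ(K) to the geometric de Jonquières involution IH. -/

import Mathlib

/-- The field `K = ℂ(x, y)` of rational functions in two variables over `ℂ`, realized as the
fraction field of the polynomial ring `ℂ[x, y]`. Its group of `ℂ`-algebra automorphisms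
`K ≃ₐ[ℂ] K` is the plane Cremona group `Cr(2)`. -/
noncomputable abbrev PlaneFunctionField : Type :=
  FractionRing (MvPolynomial (Fin 2) ℂ)

/-- The element `x` of `K = ℂ(x, y)`. -/
noncomputable def Xf : PlaneFunctionField :=
  algebraMap (MvPolynomial (Fin 2) ℂ) PlaneFunctionField (MvPolynomial.X 0)

/-- The element `y` of `K = ℂ(x, y)`. -/
noncomputable def Yf : PlaneFunctionField :=
  algebraMap (MvPolynomial (Fin 2) ℂ) PlaneFunctionField (MvPolynomial.X 1)

/-- The subfield `ℂ(x)` of `K = ℂ(x, y)`. -/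
noncomputable def Cx : IntermediateField ℂ PlaneFunctionField :=
  IntermediateField.adjoin ℂ {Xf}

/-! An automorphism of `ℂ(x, y)` over `ℂ` is determined by the images of `x` and `y`. All three
maps fix `x`, and on `y` the conjugate sends `y` to `(P / (p₀ y + p₁) - p₁) / p₀`, which equals
`(-p₁ y - p₂) / (p₀ y + p₁)` precisely because `P = p₁² - p₀ p₂`. -/

theorem FractionRing.mvPolynomial_algHom_ext {R σ B : Type*} [CommRing R] [Semiring B]
    [Algebra R B] {f g : FractionRing (MvPolynomial σ R) →ₐ[R] B}
    (h : ∀ i, f (algebraMap (MvPolynomial σ R) _ (.X i)) =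
      g (algebraMap (MvPolynomial σ R) _ (.X i))) :
    f = g :=
  IsLocalization.algHom_ext (nonZeroDivisors _) (MvPolynomial.algHom_ext h)

theorem AlgEquiv.symm_apply_eq_div_of_apply_eq_mul_add {F K : Type*} [CommSemiring F]
    [Field K] [Algebra F K] (e : K ≃ₐ[F] K) {a b y : K} (ha : e a = a) (hb : e b = b)
    (ha₀ : a ≠ 0) (hy : e y = a * y + b) : e.symm y = (y - b) / a := by
  rw [e.symm_apply_eq, map_div₀, map_sub, ha, hb, hy]
  field_simp
  ring

namespace PlaneFunctionField

theorem algEquiv_ext {f g : PlaneFunctionField ≃ₐ[ℂ] PlaneFunctionField}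
    (hx : f Xf = g Xf) (hy : f Yf = g Yf) : f = g :=
  AlgEquiv.coe_toAlgHom_injective <|
    FractionRing.mvPolynomial_algHom_ext <| Fin.forall_fin_two.2 ⟨hx, hy⟩

theorem Xf_mem_Cx : Xf ∈ Cx :=
  IntermediateField.mem_adjoin_simple_self ℂ Xf

theorem Yf_ne_zero : Yf ≠ 0 :=
  (map_ne_zero_iff _ (IsFractionRing.injective _ _)).2 (MvPolynomial.X_ne_zero 1)

end PlaneFunctionField

open PlaneFunctionField

theorem deJonquieres_conjugate_geometric_general
    (p₀ p₁ p₂ : PlaneFunctionField)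
    (hp₀ : p₀ ∈ Cx) (hp₁ : p₁ ∈ Cx) (hp₂ : p₂ ∈ Cx)
    (hp₀0 : p₀ ≠ 0)
    (dj T IH : PlaneFunctionField ≃ₐ[ℂ] PlaneFunctionField)
    (hdjx : ∀ z ∈ Cx, dj z = z) (hTx : ∀ z ∈ Cx, T z = z) (hIHx : ∀ z ∈ Cx, IH z = z)
    (hdjy : dj Yf = (p₁ ^ 2 - p₀ * p₂) / Yf)
    (hTy : T Yf = p₀ * Yf + p₁)
    (hIHy : IH Yf = (-(p₁ * Yf) - p₂) / (p₀ * Yf + p₁)) :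
    T * dj * T⁻¹ = IH := by
  have hden : p₀ * Yf + p₁ ≠ 0 := hTy ▸ (map_ne_zero T).2 Yf_ne_zero
  have hTinvX : T⁻¹ Xf = Xf := T.symm_apply_eq.2 (hTx Xf Xf_mem_Cx).symm
  have hTinvY : T⁻¹ Yf = (Yf - p₁) / p₀ :=
    T.symm_apply_eq_div_of_apply_eq_mul_add (hTx p₀ hp₀) (hTx p₁ hp₁) hp₀0 hTy
  refine algEquiv_ext ?_ ?_
  · simp only [AlgEquiv.mul_apply, hTinvX, hdjx Xf Xf_mem_Cx, hTx Xf Xf_mem_Cx,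
      hIHx Xf Xf_mem_Cx]
  · calc (T * dj * T⁻¹) Yf = ((p₁ ^ 2 - p₀ * p₂) / (p₀ * Yf + p₁) - p₁) / p₀ := by
          simp only [AlgEquiv.mul_apply, hTinvY, map_div₀, map_sub, map_pow, map_mul, hdjy,
            hdjx p₀ hp₀, hdjx p₁ hp₁, hTx p₀ hp₀, hTx p₁ hp₁, hTx p₂ hp₂, hTy]
      _ = IH Yf := by
          rw [hIHy]
          field_simp
          ring

/-- The de Jonquières involution `dj_P : y ↦ P/y`, with `P = p₁² − p₀p₂`, is conjugate (by
`T : y ↦ p₀y + p₁`) in the Cremona group to the geometric de Jonquières involution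
`IH : y ↦ (−p₁y − p₂)/(p₀y + p₁)`; indeed `T ∘ dj ∘ T⁻¹ = IH`. -/
theorem deJonquieres_conjugate_geometric
    (p₀ p₁ p₂ : PlaneFunctionField)
    (hp₀ : p₀ ∈ Cx) (hp₁ : p₁ ∈ Cx) (hp₂ : p₂ ∈ Cx)
    (hp₀0 : p₀ ≠ 0) (hP : p₁ ^ 2 - p₀ * p₂ ≠ 0)
    (dj T IH : PlaneFunctionField ≃ₐ[ℂ] PlaneFunctionField)
    (hdjx : ∀ z ∈ Cx, dj z = z) (hTx : ∀ z ∈ Cx, T z = z) (hIHx : ∀ z ∈ Cx, IH z = z)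
    (hdjy : dj Yf = (p₁ ^ 2 - p₀ * p₂) / Yf)
    (hTy : T Yf = p₀ * Yf + p₁)
    (hIHy : IH Yf = (-(p₁ * Yf) - p₂) / (p₀ * Yf + p₁)) :
    T * dj * T⁻¹ = IH :=
  deJonquieres_conjugate_geometric_general p₀ p₁ p₂ hp₀ hp₁ hp₂ hp₀0 dj T IH hdjx hTx hIHx hdjy hTy
    hIHy
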